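/- Let K ⊆ ℝᵐ be a smooth cone, A : ℝⁿ → ℝᵐ a linear map and b ∈ ℝᵐ, and assume the set S = {x ∈ ℝⁿ : Ax + b ∈ K} is nonempty. If the range of A meets the interior of K, i.e. Im A ∩ int K ≠ ∅, then the inclusion Ax + b ∈ K has a global error bound: there exists α > 0 such that dist(x, S) ≤ α·dist(Ax + b, K) for all x ∈ ℝⁿ. -/

import Mathlib

open scoped RealInnerProductSpace

noncomputable section

variable {X Y : Type*} [NormedAddCommGroup X] [InnerProductSpace ℝ X]
  [NormedAddCommGroup Y] [InnerProductSpace ℝ Y]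

/-- A cone: closed under nonnegative scalar multiplication. -/
def IsCone (C : Set X) : Prop := ∀ x ∈ C, ∀ t : ℝ, 0 ≤ t → t • x ∈ C

/-- A regular cone: a closed, convex, pointed cone with nonempty interior. -/
def IsRegularCone (C : Set X) : Prop :=
  IsCone C ∧ IsClosed C ∧ Convex ℝ C ∧ C ∩ (-C) = {0} ∧ (interior C).Nonempty

/-- The polar cone of `C`. -/
def polarCone (C : Set X) : Set X := {y | ∀ x ∈ C, ⟪x, y⟫ ≤ 0}

/-- The normal cone of a convex set `D` at a point `xbar`. -/
def normalCone (D : Set X) (xbar : X) : Set X := {y | ∀ x ∈ D, ⟪y, x - xbar⟫ ≤ 0}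

/-- `F` is a face of the convex set `C`. -/
def IsFaceOf (C F : Set X) : Prop :=
  F ⊆ C ∧ Convex ℝ F ∧ ∀ x ∈ C, ∀ y ∈ C, ∀ t : ℝ, 0 < t → t < 1 →
    (1 - t) • x + t • y ∈ F → x ∈ F ∧ y ∈ F

/-- The dimension of a set: the dimension of its affine hull. -/
def setDim (F : Set X) : ℕ := Module.finrank ℝ (affineSpan ℝ F).direction

/-- A strictly convex cone: a regular cone every proper nonzero face of which has
dimension one. -/
def IsStrictlyConvexCone (C : Set X) : Prop :=
  IsRegularCone C ∧ ∀ F : Set X, IsFaceOf C F → F ≠ C → F ≠ {0} → setDim F = 1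

/-- The ray generated by `x`. -/
def Ray (x : X) : Set X := {y | ∃ t : ℝ, 0 ≤ t ∧ y = t • x}

/-- `S` is a ray: generated by a nonzero vector. -/
def IsRay (S : Set X) : Prop := ∃ x : X, x ≠ 0 ∧ S = Ray x

/-- An extreme ray of `C`: a ray contained in `C` that is a face of `C`. -/
def IsExtremeRay (C S : Set X) : Prop := IsRay S ∧ S ⊆ C ∧ IsFaceOf C S

/-- A smooth cone: a regular cone such that every boundary point lies on an extreme ray
and the normal cone at every nonzero point of any extreme ray has dimension one. -/
def IsSmoothCone (C : Set X) : Prop :=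
  IsRegularCone C ∧
  (∀ x ∈ frontier C, ∃ S : Set X, IsExtremeRay C S ∧ x ∈ S) ∧
  (∀ S : Set X, IsExtremeRay C S → ∀ x ∈ S, x ≠ 0 → setDim (normalCone C x) = 1)

/-!
If `A u = v` and the closed ball of radius `r` around `v` lies in `K`, then for any `k ∈ K`
and `t = ‖Ax + b - k‖ / r` the residual `Ax + b - k` is absorbed by that ball scaled by `t`:
`A (x + t u) + b = k + t (v + t⁻¹ (Ax + b - k)) ∈ K`. So `x + t u ∈ S` lies at distance
`t ‖u‖` from `x`, which gives the error bound with `α = ‖u‖ / r` (plus one to make it positive).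
-/

open Metric

section ConvexCone

variable {E : Type*} [NormedAddCommGroup E] [NormedSpace ℝ E]

theorem IsCone.add_mem {C : Set X} (hC : IsCone C) (hconv : Convex ℝ C) {a c : X}
    (ha : a ∈ C) (hc : c ∈ C) : a + c ∈ C := by
  have hmid : (2 : ℝ) • ((1 / 2 : ℝ) • a + (1 / 2 : ℝ) • c) ∈ C :=
    hC _ (hconv ha hc (by norm_num) (by norm_num) (by norm_num)) 2 (by norm_num)
  rwa [show (2 : ℝ) • ((1 / 2 : ℝ) • a + (1 / 2 : ℝ) • c) = a + c by module] at hmid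

theorem IsCone.add_smul_mem_of_closedBall_subset {C : Set X} (hC : IsCone C)
    (hconv : Convex ℝ C) {v : X} {r : ℝ} (hr : 0 < r) (hball : closedBall v r ⊆ C)
    {k : X} (hk : k ∈ C) (w : X) : w + (dist w k / r) • v ∈ C := by
  rcases eq_or_ne w k with rfl | hwk
  · simpa using hk
  set t := dist w k / r
  have ht : 0 < t := div_pos (dist_pos.mpr hwk) hr
  have hshift : v + t⁻¹ • (w - k) ∈ C := by
    refine hball (mem_closedBall_iff_norm.mpr (le_of_eq ?_))
    rw [add_sub_cancel_left, norm_smul, norm_inv, Real.norm_of_nonneg ht.le, ← dist_eq_norm]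
    simp only [t]
    field_simp [dist_ne_zero.mpr hwk]
  have hsum : k + t • (v + t⁻¹ • (w - k)) ∈ C := hC.add_mem hconv hk (hC _ hshift t ht.le)
  rwa [smul_add, smul_smul, mul_inv_cancel₀ ht.ne', one_smul,
    show k + (t • v + (w - k)) = w + t • v by abel] at hsum

theorem IsCone.infDist_preimage_le {C : Set X} (hC : IsCone C) (hconv : Convex ℝ C)
    {v : X} {r : ℝ} (hr : 0 < r) (hball : closedBall v r ⊆ C) (A : E →L[ℝ] X) {u : E}
    (hu : A u = v) (b : X) (x : E) :
    infDist x {y | A y + b ∈ C} ≤ ‖u‖ / r * infDist (A x + b) C := by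
  have hCne : Nonempty C := ⟨⟨v, hball (mem_closedBall_self hr.le)⟩⟩
  rw [infDist_eq_iInf (s := C), Real.mul_iInf_of_nonneg (by positivity)]
  refine le_ciInf fun ⟨k, hk⟩ => ?_
  set t := dist (A x + b) k / r
  have hmem : A (x + t • u) + b ∈ C := by
    rw [map_add, map_smul, hu, add_right_comm]
    exact hC.add_smul_mem_of_closedBall_subset hconv hr hball hk _
  calc infDist x {y | A y + b ∈ C} ≤ dist x (x + t • u) := infDist_le_dist_of_mem hmem
    _ = t * ‖u‖ := by
      rw [dist_self_add_right, norm_smul, Real.norm_of_nonneg (by positivity)]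
    _ = ‖u‖ / r * dist (A x + b) k := by ring

end ConvexCone

theorem global_error_bound_of_range_meets_interior_general {n m : ℕ}
    (K : Set (EuclideanSpace ℝ (Fin m))) (hK : IsSmoothCone K)
    (A : EuclideanSpace ℝ (Fin n) →L[ℝ] EuclideanSpace ℝ (Fin m))
    (b : EuclideanSpace ℝ (Fin m))
    (S : Set (EuclideanSpace ℝ (Fin n))) (hS : S = {x | A x + b ∈ K})
    (hint : (Set.range A ∩ interior K).Nonempty) :
    ∃ α : ℝ, 0 < α ∧ ∀ x, Metric.infDist x S ≤ α * Metric.infDist (A x + b) K := by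
  obtain ⟨⟨hcone, -, hconv, -, -⟩, -, -⟩ := hK
  obtain ⟨v, ⟨u, hu⟩, hv⟩ := hint
  obtain ⟨r, hr, hball⟩ := nhds_basis_closedBall.mem_iff.mp (mem_interior_iff_mem_nhds.mp hv)
  subst hS
  refine ⟨‖u‖ / r + 1, by positivity, fun x => ?_⟩
  calc infDist x {y | A y + b ∈ K} ≤ ‖u‖ / r * infDist (A x + b) K :=
        hcone.infDist_preimage_le hconv hr hball A hu b x
    _ ≤ (‖u‖ / r + 1) * infDist (A x + b) K := by
        gcongr
        · exact infDist_nonneg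
        · linarith

theorem global_error_bound_of_range_meets_interior {n m : ℕ}
    (K : Set (EuclideanSpace ℝ (Fin m))) (hK : IsSmoothCone K)
    (A : EuclideanSpace ℝ (Fin n) →L[ℝ] EuclideanSpace ℝ (Fin m))
    (b : EuclideanSpace ℝ (Fin m))
    (S : Set (EuclideanSpace ℝ (Fin n))) (hS : S = {x | A x + b ∈ K}) (hSne : S.Nonempty)
    (hint : (Set.range A ∩ interior K).Nonempty) :
    ∃ α : ℝ, 0 < α ∧ ∀ x, Metric.infDist x S ≤ α * Metric.infDist (A x + b) K :=
  global_error_bound_of_range_meets_interior_general K hK A b S hS hint
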